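/- arXiv:1812.10669 — 3 statements merged into one kernel-verified Lean document; each statement's English description precedes it below -/
import Mathlib

section
/- Let {N_r : r ∈ ℕ} be a countable family of infinite subsets of ℕ which are pairwise almost disjoint (N_r ∩ N_s is finite whenever r ≠ s), and let (λ_{i,j})_{i,j∈ℕ} be a real matrix satisfying: (i) for every j, λ_{i,j} → 0 as i → ∞; (ii) for every i, Σ_j |λ_{i,j}| < ∞; (iii) Σ_j λ_{i,j} → 1 as i → ∞. Suppose moreover that for every r ∈ ℕ, Σ_{j ∈ N₁ ∪ … ∪ N_r} λ_{i,j} → 0 as i → ∞. Then there exists an infinite set N' ⊆ ℕ such that N' ∩ N_r is finite for every r ∈ ℕ and limsup_{i→∞} Σ_{j ∈ N'} λ_{i,j} ≥ 1/2. -/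
/-!
Gliding hump. Inductively choose windows `[n k, n (k + 1))` and rows `row k ≥ k` such that row
`row k` puts at least `3/4` of its sum on the part of the window outside `N 0 ∪ … ∪ N (n k)`
and at most `1/4` of its absolute mass outside the window: a late row has almost all its mass
beyond `n k` by (i), almost none on `N 0 ∪ … ∪ N (n k)`, total sum close to `1` by (iii), and a
negligible tail by (ii). The union `N'` of these window pieces then satisfies
`Σ_{j ∈ N'} λ (row k) j ≥ 3/4 - 1/4`; it meets `N r` only in the first `r` windows, and it is
infinite since by (i) sums over a finite set tend to `0`.
-/

open Filter Topology

theorem abs_tsum_subtype_sub_sum_indicator_le {α : Type*} {g : α → ℝ}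
    (hg : Summable fun j => |g j|) (s : Set α) (u : Finset α) :
    |∑' j : s, g j - ∑ j ∈ u, s.indicator g j| ≤ ∑' j, |g j| - ∑ j ∈ u, |g j| := by
  have habs : ∀ j, |s.indicator g j| ≤ |g j| := fun j => by
    by_cases hj : j ∈ s <;> simp [hj]
  have hgu : Summable fun j : ↥(u : Set α)ᶜ => |g j| := hg.comp_injective Subtype.val_injective
  have hgsu : Summable fun j : ↥(u : Set α)ᶜ => |s.indicator g j| :=
    hgu.of_nonneg_of_le (fun _ => abs_nonneg _) fun j => habs j
  rw [tsum_subtype, ← (hg.of_abs.indicator s).sum_add_tsum_compl (s := u),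
    ← hg.sum_add_tsum_compl (s := u), add_sub_cancel_left, add_sub_cancel_left]
  calc |∑' j : ↥(u : Set α)ᶜ, s.indicator g j|
      ≤ ∑' j : ↥(u : Set α)ᶜ, |s.indicator g j| := by
        simpa only [Real.norm_eq_abs] using
          norm_tsum_le_tsum_norm (f := fun j : ↥(u : Set α)ᶜ => s.indicator g j)
            (by simpa only [Real.norm_eq_abs] using hgsu)
    _ ≤ ∑' j : ↥(u : Set α)ᶜ, |g j| := hgsu.tsum_le_tsum (fun j => habs j) hgu

theorem tendsto_tsum_subtype_of_finite {ι α M : Type*} [AddCommMonoid M] [TopologicalSpace M]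
    [ContinuousAdd M] {l : Filter ι} {f : ι → α → M} {s : Set α} (hs : s.Finite)
    (hf : ∀ j, Tendsto (fun i => f i j) l (𝓝 0)) :
    Tendsto (fun i => ∑' j : s, f i j) l (𝓝 0) := by
  have := hs.fintype
  simpa only [tsum_fintype, Finset.sum_const_zero] using
    tendsto_finsetSum (Finset.univ : Finset s) fun j _ => hf j

theorem mem_iUnion_Ico_inter_iff {n : ℕ → ℕ} (hn : Monotone n) {A : ℕ → Set ℕ} {k j : ℕ}
    (hj : j ∈ Set.Ico (n k) (n (k + 1))) :
    j ∈ ⋃ m, Set.Ico (n m) (n (m + 1)) ∩ A m ↔ j ∈ A k := by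
  refine ⟨fun hmem => ?_, fun hjA => Set.mem_iUnion.2 ⟨k, hj, hjA⟩⟩
  obtain ⟨m, hjm, hjA⟩ := Set.mem_iUnion.1 hmem
  obtain rfl : m = k := by
    by_contra hne
    exact Set.disjoint_left.1 (hn.pairwise_disjoint_on_Ico_succ hne) hjm hj
  exact hjA

theorem indicator_iUnion_Ico_inter_eq {M : Type*} [Zero M] {n : ℕ → ℕ} (hn : Monotone n)
    {A : ℕ → Set ℕ} (g : ℕ → M) {k j : ℕ} (hj : j ∈ Set.Ico (n k) (n (k + 1))) :
    (⋃ m, Set.Ico (n m) (n (m + 1)) ∩ A m).indicator g j = (A k).indicator g j := by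
  classical
  simp only [Set.indicator_apply, mem_iUnion_Ico_inter_iff hn hj]

theorem iUnion_Ico_inter_inter_subset_Iio {n : ℕ → ℕ} (hn : Monotone n) {A : ℕ → Set ℕ}
    {B : Set ℕ} {r : ℕ} (hB : ∀ m, r ≤ m → Disjoint (A m) B) :
    (⋃ m, Set.Ico (n m) (n (m + 1)) ∩ A m) ∩ B ⊆ Set.Iio (n r) := by
  rintro j ⟨hj, hjB⟩
  obtain ⟨m, ⟨-, hjm⟩, hjA⟩ := Set.mem_iUnion.1 hj
  have hmr : m < r := not_le.1 fun hrm => Set.disjoint_left.1 (hB m hrm) hjA hjB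
  exact hjm.trans_le (hn hmr)

section Rows

variable {lam : ℕ → ℕ → ℝ} (h1 : ∀ j, Tendsto (fun i => lam i j) atTop (𝓝 0))
  (h2 : ∀ i, Summable (fun j => |lam i j|))
  (h3 : Tendsto (fun i => ∑' j, lam i j) atTop (𝓝 1))
include h1 h2 h3

theorem exists_row_concentrated_on_window {s : Set ℕ}
    (hs : Tendsto (fun i => ∑' j : s, lam i j) atTop (𝓝 0)) {δ : ℝ} (hδ : 0 < δ) (i₀ n₀ : ℕ) :
    ∃ i, i₀ ≤ i ∧ ∃ n₁, n₀ < n₁ ∧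
      1 - δ ≤ ∑ j ∈ Finset.Ico n₀ n₁, sᶜ.indicator (lam i) j ∧
      ∑' j, |lam i j| - ∑ j ∈ Finset.Ico n₀ n₁, |lam i j| ≤ δ := by
  have hhead : Tendsto (fun i => ∑ j ∈ Finset.range n₀, |lam i j|) atTop (𝓝 0) := by
    simpa using tendsto_finsetSum (Finset.range n₀) fun j _ => (h1 j).abs
  obtain ⟨i, hi₀, hsum, hs_small, hhead_small⟩ : ∃ i, i₀ ≤ i ∧ 1 - δ / 4 < ∑' j, lam i j ∧
      ∑' j : s, lam i j < δ / 4 ∧ ∑ j ∈ Finset.range n₀, |lam i j| < δ / 4 :=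
    ((eventually_ge_atTop i₀).and ((h3.eventually_const_lt (by linarith)).and
      ((hs.eventually_lt_const (by linarith)).and
        (hhead.eventually_lt_const (by linarith))))).exists
  obtain ⟨n₁, htail, hn₁⟩ : ∃ n₁, ∑' j, |lam i j| - δ / 4 < ∑ j ∈ Finset.range n₁, |lam i j| ∧
      n₀ < n₁ :=
    (((h2 i).tendsto_sum_tsum_nat.eventually_const_lt (by linarith)).and
      (eventually_gt_atTop n₀)).exists
  have hout : ∑' j, |lam i j| - ∑ j ∈ Finset.Ico n₀ n₁, |lam i j| ≤ δ / 2 := by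
    linarith [Finset.sum_range_add_sum_Ico (fun j => |lam i j|) hn₁.le]
  have hsplit : ∑' j : s, lam i j + ∑' j : ↥sᶜ, lam i j = ∑' j, lam i j :=
    Summable.tsum_add_tsum_compl ((h2 i).of_abs.comp_injective Subtype.val_injective)
      ((h2 i).of_abs.comp_injective Subtype.val_injective)
  have hwin := abs_le.1 (abs_tsum_subtype_sub_sum_indicator_le (h2 i) sᶜ (Finset.Ico n₀ n₁))
  exact ⟨i, hi₀, n₁, hn₁, by linarith, by linarith⟩

theorem exists_seq_rows_concentrated_on_windows {M : ℕ → Set ℕ}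
    (hM : ∀ r, Tendsto (fun i => ∑' j : M r, lam i j) atTop (𝓝 0)) {δ : ℝ} (hδ : 0 < δ) :
    ∃ n : ℕ → ℕ, StrictMono n ∧ ∃ row : ℕ → ℕ, (∀ k, k ≤ row k) ∧
      (∀ k, 1 - δ ≤ ∑ j ∈ Finset.Ico (n k) (n (k + 1)), (M (n k))ᶜ.indicator (lam (row k)) j) ∧
      ∀ k, ∑' j, |lam (row k) j| - ∑ j ∈ Finset.Ico (n k) (n (k + 1)), |lam (row k) j| ≤ δ := by
  choose row hrow finish hfinish hwin hout using fun n₀ =>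
    exists_row_concentrated_on_window h1 h2 h3 (hM n₀) hδ n₀ n₀
  set n : ℕ → ℕ := fun k => finish^[k] 0
  have hsucc : ∀ k, n (k + 1) = finish (n k) := fun k => Function.iterate_succ_apply' finish k 0
  have hn : StrictMono n := strictMono_nat_of_lt_succ fun k => hsucc k ▸ hfinish (n k)
  refine ⟨n, hn, fun k => row (n k), fun k => hn.le_apply.trans (hrow _), fun k => ?_,
    fun k => ?_⟩
  · simpa only [hsucc] using hwin (n k)
  · simpa only [hsucc] using hout (n k)

end Rows

theorem statement16_general (N : ℕ → Set ℕ)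
    (lam : ℕ → ℕ → ℝ)
    (h1 : ∀ j, Tendsto (fun i => lam i j) atTop (𝓝 0))
    (h2 : ∀ i, Summable (fun j => |lam i j|))
    (h3 : Tendsto (fun i => ∑' j, lam i j) atTop (𝓝 1))
    (h4 : ∀ r : ℕ, Tendsto (fun i => ∑' j : ↥(⋃ s ∈ Set.Iic r, N s), lam i (j : ℕ))
      atTop (𝓝 0)) :
    ∃ N' : Set ℕ, N'.Infinite ∧ (∀ r, (N' ∩ N r).Finite) ∧
      ∀ ε > (0 : ℝ), ∃ᶠ i in atTop, 1 / 2 - ε ≤ ∑' j : ↥N', lam i (j : ℕ) := by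
  obtain ⟨n, hn, row, hrow, hwin, hout⟩ :=
    exists_seq_rows_concentrated_on_windows h1 h2 h3 h4 (by norm_num : (0 : ℝ) < 1 / 4)
  set N' := ⋃ k, Set.Ico (n k) (n (k + 1)) ∩ (⋃ s ∈ Set.Iic (n k), N s)ᶜ
  have hrow_sum : ∀ k, 1 / 2 ≤ ∑' j : N', lam (row k) j := fun k => by
    have hN' : ∑ j ∈ Finset.Ico (n k) (n (k + 1)), N'.indicator (lam (row k)) j =
        ∑ j ∈ Finset.Ico (n k) (n (k + 1)),
          (⋃ s ∈ Set.Iic (n k), N s)ᶜ.indicator (lam (row k)) j :=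
      Finset.sum_congr rfl fun j hj =>
        indicator_iUnion_Ico_inter_eq hn.monotone _ (Finset.mem_Ico.1 hj)
    have := abs_le.1 (abs_tsum_subtype_sub_sum_indicator_le (h2 (row k)) N'
      (Finset.Ico (n k) (n (k + 1))))
    rw [hN'] at this
    linarith [hwin k, hout k]
  have hfreq : ∃ᶠ i in atTop, 1 / 2 ≤ ∑' j : N', lam i j :=
    frequently_atTop.2 fun a => ⟨row a, hrow a, hrow_sum a⟩
  refine ⟨N', fun hfin => ?_, fun r => ?_, fun ε hε => hfreq.mono fun i hi => by linarith⟩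
  · have hsmall : ∀ᶠ i in atTop, ∑' j : N', lam i j < 1 / 2 :=
      (tendsto_tsum_subtype_of_finite hfin h1).eventually_lt_const (by norm_num)
    obtain ⟨i, hi, hlt⟩ := (hfreq.and_eventually hsmall).exists
    linarith
  · refine (Set.finite_Iio (n r)).subset
      (iUnion_Ico_inter_inter_subset_Iio hn.monotone fun m hrm => ?_)
    exact disjoint_compl_left.mono_right
      (Set.subset_biUnion_of_mem (Set.mem_Iic.2 (hrm.trans hn.le_apply)))

/-- Given a countable almost disjoint family `{N r}` of infinite subsets of
`ℕ` and a matrix `(λ i j)` with (i) columns tending to `0`, (ii) absolutely summable rows,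
(iii) row sums tending to `1`, such that the partial sums over `N 0 ∪ … ∪ N r` tend to `0`
for each `r`, there exists an infinite `N' ⊆ ℕ` almost disjoint from every `N r` with
`limsup_i Σ_{j ∈ N'} λ i j ≥ 1/2`. -/
theorem statement16 (N : ℕ → Set ℕ) (hNinf : ∀ r, (N r).Infinite)
    (hNad : ∀ r s, r ≠ s → (N r ∩ N s).Finite)
    (lam : ℕ → ℕ → ℝ)
    (h1 : ∀ j, Tendsto (fun i => lam i j) atTop (𝓝 0))
    (h2 : ∀ i, Summable (fun j => |lam i j|))
    (h3 : Tendsto (fun i => ∑' j, lam i j) atTop (𝓝 1))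
    (h4 : ∀ r : ℕ, Tendsto (fun i => ∑' j : ↥(⋃ s ∈ Set.Iic r, N s), lam i (j : ℕ))
      atTop (𝓝 0)) :
    ∃ N' : Set ℕ, N'.Infinite ∧ (∀ r, (N' ∩ N r).Finite) ∧
      ∀ ε > (0 : ℝ), ∃ᶠ i in atTop, 1 / 2 - ε ≤ ∑' j : ↥N', lam i (j : ℕ) :=
  statement16_general N lam h1 h2 h3 h4
end

section
/- For each countable ordinal α < ω₁, let (λ^α_{i,j})_{i,j∈ℕ} be a real matrix satisfying: (i) for every j, λ^α_{i,j} → 0 as i → ∞; (ii) for every i, Σ_j |λ^α_{i,j}| < ∞; (iii) Σ_j λ^α_{i,j} → 1 as i → ∞. Then there exists an almost disjoint family F (an infinite family of infinite subsets of ℕ with pairwise finite intersections) such that for every α < ω₁ there is N ∈ F for which the sequence (Σ_{j ∈ N} λ^α_{i,j})_{i∈ℕ} does not converge to 0. -/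
/-!
Build the family by transfinite recursion along `ω₁`, keeping at every stage a countable almost
disjoint family no finitely many members of which cover a cofinite set. At stage `α`, if some
member `N` already has `Σ_{j ∈ N} λ^α_{i,j} ↛ 0`, nothing needs to be done. Otherwise every
finite union `W` of members satisfies `Σ_{j ∈ W} λ^α_{i,j} → 0`, so `Σ_{j ∉ W} λ^α_{i,j} → 1`,
and a diagonal argument over an increasing exhaustion `W₀ ⊆ W₁ ⊆ ⋯` of the family produces
finite blocks `F_k ⊆ ℕ ∖ W_k`, lying in disjoint windows, and rows `i_k → ∞` with
`Σ_{j ∈ F_k} λ^α_{i_k,j} ≥ 1/2` while row `i_k` has `ℓ¹`-mass at most `1/4` outside the `k`-th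
window. Then `M = ⋃ F_k` is almost disjoint from the family and `Σ_{j ∈ M} λ^α_{i_k,j} ≥ 1/4`.
One extra point per window, kept out of `M`, keeps the enlarged family from covering a cofinite
set. Being a family of this kind is a property of finite character, so it survives limit stages,
and the stages stay countable because `α < ω₁`.
-/

open Filter Function Set Topology

namespace Order.IsOfFiniteCharacter

variable {α : Type*} {𝒢 : Set (Set α)}

theorem sUnion_mem (h𝒢 : IsOfFiniteCharacter 𝒢) {c : Set (Set α)} (hc𝒢 : c ⊆ 𝒢)
    (hc : IsChain (· ⊆ ·) c) (hne : c.Nonempty) : ⋃₀ c ∈ 𝒢 :=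
  (h𝒢 _).2 fun s hs hsf =>
    let ⟨t, htc, hst⟩ := hc.directedOn.exists_mem_subset_of_finite_of_subset_sUnion hne hsf hs
    (h𝒢 t).1 (hc𝒢 htc) s hst hsf

theorem exists_mem_forall_exists {ι : Type*} [LinearOrder ι] [WellFoundedLT ι]
    (h𝒢 : IsOfFiniteCharacter 𝒢) (hι : ∀ i : ι, (Iio i).Countable)
    {A₀ : Set α} (hA₀ : A₀ ∈ 𝒢) (hA₀c : A₀.Countable) {p : ι → α → Prop}
    (hstep : ∀ i, ∀ A ∈ 𝒢, A.Countable → ∃ A' ∈ 𝒢, A ⊆ A' ∧ A'.Countable ∧ ∃ a ∈ A', p i a) :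
    ∃ S ∈ 𝒢, A₀ ⊆ S ∧ ∀ i, ∃ a ∈ S, p i a := by
  choose! ext hext𝒢 hsub hextc hp using hstep
  -- `stage i` contains all earlier stages even where `ext` is junk, which makes it monotone.
  obtain ⟨stage, hstage⟩ : ∃ stage : ι → Set α, ∀ i,
      stage i = (A₀ ∪ ⋃ j < i, stage j) ∪ ext i (A₀ ∪ ⋃ j < i, stage j) :=
    ⟨_, wellFounded_lt.fix_eq fun i stage =>
      (A₀ ∪ ⋃ (j) (hj : j < i), stage j hj) ∪ ext i (A₀ ∪ ⋃ (j) (hj : j < i), stage j hj)⟩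
  have hA₀_sub (i : ι) : A₀ ⊆ stage i := hstage i ▸ subset_union_left.trans subset_union_left
  have hmono : Monotone stage := fun j i hji => by
    rcases hji.eq_or_lt with rfl | hji
    · exact subset_rfl
    · rw [hstage i]
      exact (subset_iUnion₂ (s := fun k (_ : k < i) => stage k) j hji).trans
        (subset_union_right.trans subset_union_left)
  have hunion (s : Set ι) (hs : ∀ j ∈ s, stage j ∈ 𝒢) : A₀ ∪ ⋃ j ∈ s, stage j ∈ 𝒢 := by
    rw [← sUnion_image, ← sUnion_insert]
    exact h𝒢.sUnion_mem (insert_subset hA₀ (image_subset_iff.2 hs))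
      ((hmono.isChain_range.mono (image_subset_range _ _)).insert
        fun b ⟨j, _, hj⟩ _ => Or.inl (hj ▸ hA₀_sub j))
      (insert_nonempty _ _)
  have hgood (i : ι) : stage i ∈ 𝒢 ∧ (stage i).Countable ∧ ∃ a ∈ stage i, p i a := by
    induction i using WellFoundedLT.induction with
    | ind i ih =>
      have h𝒢i : A₀ ∪ ⋃ j < i, stage j ∈ 𝒢 := hunion (Iio i) fun j hj => (ih j hj).1
      have hci : (A₀ ∪ ⋃ j < i, stage j).Countable :=
        hA₀c.union ((hι i).biUnion fun j hj => (ih j hj).2.1)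
      rw [hstage i, union_eq_right.2 (hsub i _ h𝒢i hci)]
      exact ⟨hext𝒢 i _ h𝒢i hci, hextc i _ h𝒢i hci, hp i _ h𝒢i hci⟩
  refine ⟨A₀ ∪ ⋃ i, stage i, by simpa using hunion univ fun i _ => (hgood i).1,
    subset_union_left, fun i => ?_⟩
  obtain ⟨a, ha, hpa⟩ := (hgood i).2.2
  exact ⟨a, subset_union_right (subset_iUnion stage i ha), hpa⟩

end Order.IsOfFiniteCharacter

theorem Set.Countable.exists_monotone_finite_subsets {γ : Type*} {A : Set γ} (hA : A.Countable) :
    ∃ B : ℕ → Set γ, Monotone B ∧ (∀ k, (B k).Finite ∧ B k ⊆ A) ∧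
      ∀ C ⊆ A, C.Finite → ∃ k, C ⊆ B k := by
  rcases A.eq_empty_or_nonempty with rfl | hne
  · exact ⟨fun _ => ∅, monotone_const, fun _ => ⟨finite_empty, subset_rfl⟩,
      fun C hC _ => ⟨0, hC⟩⟩
  obtain ⟨e, rfl⟩ := hA.exists_eq_range hne
  have hmono : Monotone fun k => e '' Iio k := fun k l hkl => image_mono (Iio_subset_Iio hkl)
  refine ⟨fun k => e '' Iio k, hmono, fun k => ⟨(finite_Iio k).image e, image_subset_range _ _⟩,
    fun C hC hCf => ?_⟩
  have hCU : C ⊆ ⋃₀ range fun k => e '' Iio k := fun c hc => by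
    obtain ⟨l, rfl⟩ := hC hc
    exact mem_sUnion.2 ⟨_, ⟨l + 1, rfl⟩, mem_image_of_mem e (Nat.lt_succ_self l)⟩
  obtain ⟨_, ⟨k, rfl⟩, hk⟩ := (directedOn_range.2 hmono.directed_le)
    |>.exists_mem_subset_of_finite_of_subset_sUnion (range_nonempty _) hCf hCU
  exact ⟨k, hk⟩

theorem finite_iUnion_inter_of_disjoint {α : Type*} {G W : ℕ → Set α} (hG : ∀ l, (G l).Finite)
    (hW : Monotone W) (hGW : ∀ l, Disjoint (G l) (W l)) (k : ℕ) : ((⋃ l, G l) ∩ W k).Finite := by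
  refine ((finite_lt_nat k).biUnion fun l _ => hG l).subset ?_
  rintro j ⟨hj, hjW⟩
  obtain ⟨l, hl⟩ := mem_iUnion.1 hj
  exact mem_iUnion₂.2 ⟨l, lt_of_not_ge fun hkl => disjoint_left.1 (hGW l) hl (hW hkl hjW), hl⟩

section ADFamily

variable {α : Type*}

/-- The last condition leaves room to add one more set to the family. -/
structure IsCoinfiniteAD (A : Set (Set α)) : Prop where
  infinite : ∀ M ∈ A, M.Infinite
  finite_inter : A.Pairwise fun M N => (M ∩ N).Finite
  compl_sUnion_infinite : ∀ B ⊆ A, B.Finite → (⋃₀ B)ᶜ.Infinite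

namespace IsCoinfiniteAD

variable {A : Set (Set α)}

theorem mono (hA : IsCoinfiniteAD A) {B : Set (Set α)} (hBA : B ⊆ A) : IsCoinfiniteAD B where
  infinite M hM := hA.infinite M (hBA hM)
  finite_inter := hA.finite_inter.mono hBA
  compl_sUnion_infinite C hCB := hA.compl_sUnion_infinite C (hCB.trans hBA)

theorem insert (hA : IsCoinfiniteAD A) {M : Set α} (hM : M.Infinite)
    (hMA : ∀ N ∈ A, (M ∩ N).Finite)
    (hcompl : ∀ B ⊆ A, B.Finite → (⋃₀ B ∪ M)ᶜ.Infinite) : IsCoinfiniteAD (insert M A) where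
  infinite := forall_mem_insert.2 ⟨hM, hA.infinite⟩
  finite_inter := pairwise_insert.2
    ⟨hA.finite_inter, fun N hN _ => ⟨hMA N hN, inter_comm M N ▸ hMA N hN⟩⟩
  compl_sUnion_infinite B hB hBf := by
    refine (hcompl (B \ {M}) (sdiff_singleton_subset_iff.2 hB) hBf.sdiff).mono
      (compl_subset_compl.2 ?_)
    rw [union_comm, ← sUnion_insert]
    exact sUnion_mono (subset_insert_sdiff_singleton M B)

end IsCoinfiniteAD

theorem isOfFiniteCharacter_isCoinfiniteAD :
    Order.IsOfFiniteCharacter {A : Set (Set α) | IsCoinfiniteAD A} := fun _ =>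
  ⟨fun hA _ hBA _ => IsCoinfiniteAD.mono hA hBA, fun h =>
    { infinite := fun M hM =>
        (h {M} (singleton_subset_iff.2 hM) (finite_singleton M)).infinite M rfl
      finite_inter := fun M hM N hN hne =>
        (h {M, N} (insert_subset hM (singleton_subset_iff.2 hN)) (toFinite _)).finite_inter
          (mem_insert M _) (mem_insert_of_mem M rfl) hne
      compl_sUnion_infinite := fun B hBA hBf =>
        (h B hBA hBf).compl_sUnion_infinite B subset_rfl hBf }⟩

section Fibers

variable {γ : Type*} {f : α → γ}

theorem injective_preimage_singleton (hf : ∀ c, (f ⁻¹' {c}).Nonempty) :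
    Injective fun c => f ⁻¹' {c} := fun c d (hcd : f ⁻¹' {c} = f ⁻¹' {d}) => by
  obtain ⟨x, hx⟩ := hf c
  have hxd : x ∈ f ⁻¹' {d} := hcd ▸ hx
  exact hx.symm.trans hxd

theorem isCoinfiniteAD_range_preimage_singleton [Infinite γ] (hf : ∀ c, (f ⁻¹' {c}).Infinite) :
    IsCoinfiniteAD (range fun c => f ⁻¹' {c}) where
  infinite := forall_mem_range.2 hf
  finite_inter := by
    rintro _ ⟨c, rfl⟩ _ ⟨d, rfl⟩ hne
    have hcd : c ≠ d := fun h => hne (h ▸ rfl)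
    simp [← preimage_inter, hcd]
  compl_sUnion_infinite B hB hBf := by
    obtain ⟨c, hc⟩ : ∃ c, f ⁻¹' {c} ∉ B := by
      by_contra! h
      exact (infinite_range_of_injective
        (injective_preimage_singleton fun c => (hf c).nonempty)).mono (range_subset_iff.2 h) hBf
    refine (hf c).mono fun x hx ⟨N, hNB, hxN⟩ => ?_
    obtain ⟨d, rfl⟩ := hB hNB
    exact hc (((hx : f x = c).symm.trans hxN) ▸ hNB)

end Fibers

end ADFamily

section Summation

variable {β : Type*} {f : β → ℝ}

theorem Summable.tsum_subtype_eq_inter_add_sdiff (hf : Summable f) (s t : Set β) :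
    ∑' j : s, f j = ∑' j : ↥(s ∩ t), f j + ∑' j : ↥(s \ t), f j := by
  conv_lhs => rw [← inter_union_sdiff s t]
  exact Summable.tsum_union_disjoint disjoint_sdiff_inter.symm (hf.subtype _) (hf.subtype _)

theorem Summable.tsum_subtype_abs_mono (hf : Summable f) {s t : Set β} (hst : s ⊆ t) :
    ∑' j : s, |f j| ≤ ∑' j : t, |f j| :=
  (hf.abs.subtype s).tsum_le_tsum_of_inj (inclusion hst) (inclusion_injective hst)
    (fun _ _ => abs_nonneg _) (fun _ => le_rfl) (hf.abs.subtype t)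

theorem Summable.abs_tsum_subtype_le (hf : Summable f) (s : Set β) :
    |∑' j : s, f j| ≤ ∑' j : s, |f j| :=
  norm_tsum_le_tsum_norm (f := fun j : s => f j) (hf.abs.subtype s)

theorem Summable.tsum_inter_sub_le (hf : Summable f) (s t : Set β) :
    ∑' j : ↥(s ∩ t), f j - ∑' j : ↥tᶜ, |f j| ≤ ∑' j : s, f j := by
  have hrest : -∑' j : ↥(s \ t), f j ≤ ∑' j : ↥tᶜ, |f j| :=
    (neg_le_abs _).trans ((hf.abs_tsum_subtype_le _).trans
      (hf.tsum_subtype_abs_mono fun _ hj => hj.2))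
  linarith [hf.tsum_subtype_eq_inter_add_sdiff s t]

theorem Summable.exists_finset_subset_lt_sum (hf : Summable f) {s : Set β} {c : ℝ}
    (hc : c < ∑' j : s, f j) : ∃ F : Finset β, ↑F ⊆ s ∧ c < ∑ j ∈ F, f j := by
  obtain ⟨T, hT⟩ := ((hf.subtype s).hasSum.eventually (lt_mem_nhds hc)).exists
  exact ⟨T.map (.subtype (· ∈ s)), by simp, by rwa [Finset.sum_map]⟩

theorem Summable.eventually_tsum_compl_Ico_lt {g : ℕ → ℝ} (hg : Summable g) {m : ℕ} {ε : ℝ}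
    (hε : ∑ j ∈ Finset.range m, g j < ε) : ∀ᶠ m' in atTop, ∑' j : ↥(Ico m m')ᶜ, g j < ε := by
  have hlim : Tendsto
      (fun m' => ∑' j, g j - (∑ j ∈ Finset.range m', g j - ∑ j ∈ Finset.range m, g j))
      atTop (𝓝 (∑ j ∈ Finset.range m, g j)) := by
    have := (tendsto_const_nhds (x := ∑' j, g j)).sub
      (hg.hasSum.tendsto_sum_nat.sub (tendsto_const_nhds (x := ∑ j ∈ Finset.range m, g j)))
    rwa [sub_sub_cancel] at this
  filter_upwards [hlim.eventually (gt_mem_nhds hε), eventually_ge_atTop m] with m' hlt hm'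
  rw [← Finset.sum_Ico_eq_sub _ hm', ← Finset.tsum_subtype', Finset.coe_Ico] at hlt
  linarith [hg.tsum_subtype_add_tsum_subtype_compl (Ico m m')]

end Summation

def IsNegligible {β : Type*} (lam : ℕ → β → ℝ) (s : Set β) : Prop :=
  Tendsto (fun i => ∑' j : s, lam i j) atTop (𝓝 0)

section Negligible

variable {β : Type*} {lam : ℕ → β → ℝ} {s t : Set β}

theorem isNegligible_of_finite (hcol : ∀ j, Tendsto (fun i => lam i j) atTop (𝓝 0))
    (hs : s.Finite) : IsNegligible lam s := by
  lift s to Finset β using hs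
  unfold IsNegligible
  simp_rw [Finset.tsum_subtype' s]
  simpa using tendsto_finsetSum s fun j _ => hcol j

theorem IsNegligible.union (hcol : ∀ j, Tendsto (fun i => lam i j) atTop (𝓝 0))
    (hrow : ∀ i, Summable (lam i)) (hs : IsNegligible lam s) (ht : IsNegligible lam t)
    (hst : (s ∩ t).Finite) : IsNegligible lam (s ∪ t) := by
  have hsum (i : ℕ) : ∑' j : ↥(s ∪ t), lam i j =
      ∑' j : s, lam i j + (∑' j : t, lam i j - ∑' j : ↥(t ∩ s), lam i j) := by
    have hunion := (hrow i).tsum_subtype_eq_inter_add_sdiff (s ∪ t) s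
    rw [union_inter_cancel_left, union_sdiff_left] at hunion
    linarith [(hrow i).tsum_subtype_eq_inter_add_sdiff t s]
  have hlim := hs.add (ht.sub (isNegligible_of_finite hcol (inter_comm s t ▸ hst)))
  simp only [sub_zero, add_zero] at hlim
  exact hlim.congr fun i => (hsum i).symm

theorem IsNegligible.tendsto_compl (hrow : ∀ i, Summable (lam i))
    (hsum : Tendsto (fun i => ∑' j, lam i j) atTop (𝓝 1)) (hs : IsNegligible lam s) :
    Tendsto (fun i => ∑' j : ↥sᶜ, lam i j) atTop (𝓝 1) := by
  have hlim := hsum.sub hs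
  simp only [sub_zero] at hlim
  refine hlim.congr fun i => ?_
  linarith [(hrow i).tsum_subtype_add_tsum_subtype_compl s]

theorem isNegligible_sUnion (hcol : ∀ j, Tendsto (fun i => lam i j) atTop (𝓝 0))
    (hrow : ∀ i, Summable (lam i)) {B : Set (Set β)} (hB : B.Finite)
    (hBad : B.Pairwise fun M N => (M ∩ N).Finite) (hneg : ∀ N ∈ B, IsNegligible lam N) :
    IsNegligible lam (⋃₀ B) := by
  induction B, hB using Set.Finite.induction_on with
  | empty => simpa using isNegligible_of_finite hcol finite_empty
  | @insert N B hNB hB ih =>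
    rw [sUnion_insert]
    refine (hneg N (mem_insert N B)).union hcol hrow
      (ih (hBad.mono (subset_insert N B)) fun M hM => hneg M (mem_insert_of_mem N hM)) ?_
    rw [sUnion_eq_biUnion, inter_iUnion₂]
    exact hB.biUnion fun M hM =>
      hBad (mem_insert N B) (mem_insert_of_mem N hM) (ne_of_mem_of_not_mem hM hNB).symm

end Negligible

section Blocks

variable {lam : ℕ → ℕ → ℝ}

/-- `F` is the block, `[m, m')` its window, and `y` a point of the window kept outside `F`. -/
theorem exists_block (hcol : ∀ j, Tendsto (fun i => lam i j) atTop (𝓝 0))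
    (hrow : ∀ i, Summable (lam i)) (hsum : Tendsto (fun i => ∑' j, lam i j) atTop (𝓝 1))
    {W : Set ℕ} (hW : IsNegligible lam W) (hWc : Wᶜ.Infinite) (m : ℕ) :
    ∃ i ≥ m, ∃ y, ∃ F : Finset ℕ, ∃ m', y ∉ F ∧ ↑(insert y F) ⊆ Ico m m' \ W ∧
      ∑' j : ↥(Ico m m')ᶜ, |lam i j| ≤ 1 / 4 ∧ 1 / 2 ≤ ∑ j ∈ F, lam i j := by
  obtain ⟨y, hyW, hmy⟩ := hWc.exists_gt m
  have hV : IsNegligible lam (W ∪ Iic y) := hW.union hcol hrow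
    (isNegligible_of_finite hcol (finite_Iic y)) ((finite_Iic y).subset inter_subset_right)
  have hhead : Tendsto (fun i => ∑ j ∈ Finset.range m, |lam i j|) atTop (𝓝 0) := by
    simpa using tendsto_finsetSum _ fun j _ => (hcol j).abs
  obtain ⟨i, him, hiV, hihead⟩ := ((eventually_ge_atTop m).and
    (((hV.tendsto_compl hrow hsum).eventually (lt_mem_nhds (by norm_num : (1 : ℝ) / 2 < 1))).and
      (hhead.eventually (gt_mem_nhds (by norm_num : (0 : ℝ) < 1 / 4))))).exists
  obtain ⟨F, hFV, hF⟩ := (hrow i).exists_finset_subset_lt_sum hiV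
  obtain ⟨m', hout, hym', hFm'⟩ := ((hrow i).abs.eventually_tsum_compl_Ico_lt hihead).and
    ((eventually_gt_atTop y).and (F.eventually_all.2 fun j _ => eventually_gt_atTop j)) |>.exists
  have hFy (j : ℕ) (hj : j ∈ F) : j ∉ W ∧ y < j := by simpa using hFV hj
  refine ⟨i, him, y, F, m', fun hy => (hFy y hy).2.false, ?_, hout.le, hF.le⟩
  rintro j hj
  rcases Finset.mem_insert.1 hj with rfl | hj
  · exact ⟨⟨hmy.le, hym'⟩, hyW⟩
  · exact ⟨⟨hmy.le.trans (hFy j hj).2.le, hFm' j hj⟩, (hFy j hj).1⟩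

theorem not_isNegligible_iUnion_of_blocks (hrow : ∀ i, Summable (lam i)) {J : ℕ → Set ℕ}
    (hJ : Pairwise (Disjoint on J)) {F : ℕ → Finset ℕ} (hFJ : ∀ k, ↑(F k) ⊆ J k) {i : ℕ → ℕ}
    (hi : Tendsto i atTop atTop) (hout : ∀ k, ∑' j : ↥(J k)ᶜ, |lam (i k) j| ≤ 1 / 4)
    (hin : ∀ k, 1 / 2 ≤ ∑ j ∈ F k, lam (i k) j) : ¬ IsNegligible lam (⋃ k, (F k : Set ℕ)) := by
  have hinter (k : ℕ) : (⋃ l, (F l : Set ℕ)) ∩ J k = F k := by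
    refine subset_antisymm ?_ fun j hj => ⟨mem_iUnion.2 ⟨k, hj⟩, hFJ k hj⟩
    rintro j ⟨hj, hjk⟩
    obtain ⟨l, hl⟩ := mem_iUnion.1 hj
    obtain rfl : l = k := by
      by_contra hlk
      exact disjoint_left.1 (hJ hlk) (hFJ l hl) hjk
    exact hl
  have hlow (k : ℕ) : 1 / 4 ≤ ∑' j : ↥(⋃ l, (F l : Set ℕ)), lam (i k) j := by
    have := (hrow (i k)).tsum_inter_sub_le (⋃ l, (F l : Set ℕ)) (J k)
    rw [hinter, Finset.tsum_subtype'] at this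
    linarith [hout k, hin k]
  intro hneg
  have := ge_of_tendsto' (hneg.comp hi) hlow
  norm_num at this

theorem exists_not_isNegligible_of_monotone
    (hcol : ∀ j, Tendsto (fun i => lam i j) atTop (𝓝 0)) (hrow : ∀ i, Summable (lam i))
    (hsum : Tendsto (fun i => ∑' j, lam i j) atTop (𝓝 1))
    {W : ℕ → Set ℕ} (hWmono : Monotone W) (hW : ∀ k, IsNegligible lam (W k))
    (hWc : ∀ k, (W k)ᶜ.Infinite) :
    ∃ M Y : Set ℕ, ¬ IsNegligible lam M ∧ Y.Infinite ∧ Disjoint M Y ∧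
      ∀ k, ((M ∪ Y) ∩ W k).Finite := by
  choose! i hi y F next hyF hsub hout hin using fun k => exists_block hcol hrow hsum (hW k) (hWc k)
  -- `m 0 = 0` and `m (k + 1) = next k (m k)`: the `k`-th window is `[m k, m (k + 1))`.
  let m : ℕ → ℕ := fun k => Nat.rec 0 (fun k mk => next k mk) k
  set J : ℕ → Set ℕ := fun k => Ico (m k) (m (k + 1))
  have hGJ (k : ℕ) : ↑(insert (y k (m k)) (F k (m k))) ⊆ J k \ W k := hsub k (m k)
  have hyJ (k : ℕ) : y k (m k) ∈ J k := (hGJ k (Finset.mem_insert_self _ _)).1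
  have hFJ (k : ℕ) : ↑(F k (m k)) ⊆ J k := fun j hj => (hGJ k (Finset.mem_insert_of_mem hj)).1
  have hm : StrictMono m := strictMono_nat_of_lt_succ fun k => (hyJ k).1.trans_lt (hyJ k).2
  have hJ : Pairwise (Disjoint on J) := hm.monotone.pairwise_disjoint_on_Ico_succ
  have hyk {k l : ℕ} (h : y l (m l) ∈ J k) : l = k := by
    by_contra hlk
    exact disjoint_left.1 (hJ hlk) (hyJ l) h
  refine ⟨⋃ k, ↑(F k (m k)), range fun k => y k (m k), ?_, ?_, ?_, fun k => ?_⟩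
  · exact not_isNegligible_iUnion_of_blocks hrow hJ hFJ
      (tendsto_atTop_mono (fun k => (hm.id_le k).trans (hi k (m k))) tendsto_id)
      (fun k => hout k (m k)) (fun k => hin k (m k))
  · exact infinite_range_of_injective fun k l (h : y k (m k) = y l (m l)) =>
      (hyk (h ▸ hyJ k)).symm
  · refine disjoint_iUnion_left.2 fun k => disjoint_left.2 ?_
    rintro _ hF ⟨l, rfl⟩
    obtain rfl := hyk (hFJ k hF)
    exact hyF l (m l) hF
  · refine (finite_iUnion_inter_of_disjoint
      (fun l => (insert (y l (m l)) (F l (m l))).finite_toSet) hWmono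
      (fun l => disjoint_left.2 fun j hj => (hGJ l hj).2) k).subset
      (inter_subset_inter_left _ (union_subset (iUnion_mono fun l => ?_) ?_))
    · exact Finset.coe_subset.2 (Finset.subset_insert _ _)
    · exact range_subset_iff.2 fun l => mem_iUnion.2 ⟨l, Finset.mem_insert_self _ _⟩

theorem exists_isCoinfiniteAD_insert_not_isNegligible
    (hcol : ∀ j, Tendsto (fun i => lam i j) atTop (𝓝 0)) (hrow : ∀ i, Summable (lam i))
    (hsum : Tendsto (fun i => ∑' j, lam i j) atTop (𝓝 1)) {A : Set (Set ℕ)}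
    (hA : IsCoinfiniteAD A) (hAc : A.Countable) :
    ∃ M, IsCoinfiniteAD (insert M A) ∧ ¬ IsNegligible lam M := by
  by_cases hfail : ∃ N ∈ A, ¬ IsNegligible lam N
  · obtain ⟨N, hN, hNneg⟩ := hfail
    exact ⟨N, (insert_eq_of_mem hN).symm ▸ hA, hNneg⟩
  push Not at hfail
  obtain ⟨B, hBmono, hB, hAB⟩ := hAc.exists_monotone_finite_subsets
  obtain ⟨M, Y, hM, hY, hMY, hfin⟩ := exists_not_isNegligible_of_monotone hcol hrow hsum
    (fun k l hkl => sUnion_mono (hBmono hkl))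
    (fun k => isNegligible_sUnion hcol hrow (hB k).1 (hA.finite_inter.mono (hB k).2)
      fun N hN => hfail N ((hB k).2 hN))
    (fun k => hA.compl_sUnion_infinite _ (hB k).2 (hB k).1)
  have hcover (C : Set (Set ℕ)) (hC : C ⊆ A) (hCf : C.Finite) : ∃ k, ⋃₀ C ⊆ ⋃₀ B k :=
    (hAB C hC hCf).imp fun _ => sUnion_mono
  refine ⟨M, hA.insert (fun hMf => hM (isNegligible_of_finite hcol hMf)) (fun N hN => ?_)
    (fun C hC hCf => ?_), hM⟩
  · obtain ⟨k, hk⟩ := hcover {N} (singleton_subset_iff.2 hN) (finite_singleton N)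
    rw [sUnion_singleton] at hk
    exact (hfin k).subset (inter_subset_inter subset_union_left hk)
  · obtain ⟨k, hk⟩ := hcover C hC hCf
    refine (hY.sdiff (hfin k)).mono ?_
    rintro j ⟨hjY, hjW⟩ (hjC | hjM)
    · exact hjW ⟨subset_union_right hjY, hk hjC⟩
    · exact disjoint_left.1 hMY hjM hjY

end Blocks

theorem countable_Iio_of_lt_ord_aleph_one {o : Ordinal} (ho : o < (Cardinal.aleph 1).ord) :
    (Iio o).Countable := by
  rw [← Cardinal.le_aleph0_iff_set_countable, Cardinal.mk_Iio_ordinal, Cardinal.lift_le_aleph0,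
    ← Cardinal.lt_aleph_one_iff, ← Cardinal.lt_ord]
  exact ho

/-- Given, for each countable ordinal `α < ω₁`, a matrix `(λ^α i j)` with
(i) columns tending to `0`, (ii) absolutely summable rows, (iii) row sums tending to `1`,
there exists an almost disjoint family `F` such that for every `α < ω₁` some `N ∈ F`
satisfies that `(Σ_{j ∈ N} λ^α i j)_i` does not converge to `0`. -/
theorem statement17
    (lam : ↥(Set.Iio (Cardinal.aleph 1).ord) → ℕ → ℕ → ℝ)
    (h1 : ∀ α j, Tendsto (fun i => lam α i j) atTop (𝓝 0))
    (h2 : ∀ α i, Summable (fun j => |lam α i j|))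
    (h3 : ∀ α, Tendsto (fun i => ∑' j, lam α i j) atTop (𝓝 1)) :
    ∃ F : Set (Set ℕ), F.Infinite ∧ (∀ M ∈ F, M.Infinite) ∧
      (∀ M ∈ F, ∀ M' ∈ F, M ≠ M' → (M ∩ M').Finite) ∧
      ∀ α, ∃ M ∈ F,
        ¬ Tendsto (fun i => ∑' j : ↥M, lam α i (j : ℕ)) atTop (𝓝 0) := by
  -- Seeding the recursion with these fibres is what makes the final family infinite.
  have hfib (c : ℕ) : ((fun n : ℕ => n.unpair.1) ⁻¹' {c}).Infinite :=
    (infinite_range_of_injective (f := Nat.pair c) fun a b h => (Nat.pair_eq_pair.1 h).2).mono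
      (range_subset_iff.2 fun b => by simp)
  obtain ⟨F, hF, hA₀F, hnot⟩ := isOfFiniteCharacter_isCoinfiniteAD.exists_mem_forall_exists
    (fun α : Iio (Cardinal.aleph 1).ord =>
      (countable_Iio_of_lt_ord_aleph_one α.2).preimage Subtype.val_injective)
    (isCoinfiniteAD_range_preimage_singleton hfib) (countable_range _) fun α A hA hAc => by
      obtain ⟨M, hM, hMneg⟩ := exists_isCoinfiniteAD_insert_not_isNegligible (h1 α)
        (fun i => summable_abs_iff.1 (h2 α i)) (h3 α) hA hAc
      exact ⟨insert M A, hM, subset_insert M A, hAc.insert M, M, mem_insert M A, hMneg⟩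
  exact ⟨F, (infinite_range_of_injective
      (injective_preimage_singleton fun c => (hfib c).nonempty)).mono hA₀F,
    hF.infinite, fun M hM M' hM' hne => hF.finite_inter hM hM' hne, hnot⟩
end

section
/- Let X be a real Banach space with property (E'), i.e., every convex, norm-bounded, w*-sequentially closed subset of X* is w*-closed. Then X is fully Mackey complete if and only if X is fully Mazur. -/
open Filter Topology

noncomputable section

variable (X : Type*) [NormedAddCommGroup X] [NormedSpace ℝ X]

/-- The dual norm of an element of the weak-star dual. -/
def dnorm (y : WeakDual ℝ X) : ℝ := ‖WeakDual.toStrongDual y‖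

/-- A subspace `Y ⊆ X*` is norming if there is `c > 0` with
`c·‖x‖ ≤ sup {y x : y ∈ Y, ‖y‖ ≤ 1}` for every `x ∈ X`. -/
def IsNorming (Y : Submodule ℝ (WeakDual ℝ X)) : Prop :=
  ∃ c > 0, ∀ x : X, c * ‖x‖ ≤ sSup {r : ℝ | ∃ y ∈ Y, dnorm X y ≤ 1 ∧ r = y x}

/-- `Y` is closed for the dual norm topology of `X*`. -/
def NormClosed (Y : Submodule ℝ (WeakDual ℝ X)) : Prop :=
  IsClosed ((fun y => WeakDual.toStrongDual y) '' (Y : Set (WeakDual ℝ X)))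

/-- A linear functional on `Y ⊆ X*` is weak-star sequentially continuous. -/
def WStarSeqCont {Y : Submodule ℝ (WeakDual ℝ X)} (f : Y →ₗ[ℝ] ℝ) : Prop :=
  ∀ (u : ℕ → Y) (y : Y),
    Tendsto (fun n => (u n : WeakDual ℝ X)) atTop (𝓝 (y : WeakDual ℝ X)) →
      Tendsto (fun n => f (u n)) atTop (𝓝 (f y))

/-- `(Y, w*)` has the Mazur property: every weak-star sequentially continuous
linear functional on `Y` is weak-star continuous. -/
def MazurProp (Y : Submodule ℝ (WeakDual ℝ X)) : Prop :=
  ∀ f : Y →ₗ[ℝ] ℝ, WStarSeqCont X f → Continuous f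

/-- `X` is fully Mazur. -/
def FullyMazur : Prop :=
  ∀ Y : Submodule ℝ (WeakDual ℝ X), IsNorming X Y → NormClosed X Y → MazurProp X Y

/-- The Grothendieck condition on a linear functional `f : Y → ℝ`: the restriction of `f`
to every absolutely convex weak-star compact subset of `Y` is weak-star continuous. -/
def GrothendieckCond {Y : Submodule ℝ (WeakDual ℝ X)} (f : Y →ₗ[ℝ] ℝ) : Prop :=
  ∀ K : Set (WeakDual ℝ X), K ⊆ (Y : Set (WeakDual ℝ X)) → Convex ℝ K → Balanced ℝ K →
    IsCompact K → ContinuousOn (fun y : Y => f y) (Subtype.val ⁻¹' K)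

/-- Completeness of the Mackey space `(X, μ(X,Y))`, via Grothendieck's criterion. -/
def MackeyComplete (Y : Submodule ℝ (WeakDual ℝ X)) : Prop :=
  ∀ f : Y →ₗ[ℝ] ℝ, GrothendieckCond X f → Continuous f

/-- `X` is fully Mackey complete. -/
def FullyMackeyComplete : Prop :=
  ∀ Y : Submodule ℝ (WeakDual ℝ X), IsNorming X Y → NormClosed X Y → MackeyComplete X Y

/-- `S₁(A)`: the set of weak-star limits of sequences contained in `A`. -/
def S1 (A : Set (WeakDual ℝ X)) : Set (WeakDual ℝ X) :=
  {z | ∃ u : ℕ → WeakDual ℝ X, (∀ n, u n ∈ A) ∧ Tendsto u atTop (𝓝 z)}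

end

/-!
Under (E′), the sublevel sets of a w*-sequentially continuous functional on a convex
w*-compact subset of `Y` are convex, norm-bounded (uniform boundedness) and w*-sequentially
closed, hence w*-closed; so the functional is w*-continuous there, which is Grothendieck's
condition. Conversely, if `Y` is norm-closed, every w*-null sequence `(eₙ)` in `Y` lies in the
absolutely convex set `{∑ lₙ eₙ : ∑ |lₙ| ≤ 1}`, which is contained in `Y` and is w*-compact as
the continuous image of the ℓ¹-ball with the product topology; so Grothendieck's condition
forces w*-sequential continuity. Hence the Mazur property and the Grothendieck criterion agree
on every norm-closed `Y`.
-/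

theorem WeakDual.exists_norm_le_of_isCompact {X : Type*} [NormedAddCommGroup X]
    [NormedSpace ℝ X] [CompleteSpace X] {K : Set (WeakDual ℝ X)} (hK : IsCompact K) :
    ∃ M, ∀ z ∈ K, ‖WeakDual.toStrongDual z‖ ≤ M := by
  have hb := WeakDual.isBounded_iff_isVonNBounded.2 (hK.isVonNBounded (𝕜 := ℝ))
  rw [← WeakDual.isBounded_toWeakDual_preimage_iff_isBounded, isBounded_iff_forall_norm_le] at hb
  obtain ⟨M, hM⟩ := hb
  exact ⟨M, fun z hz => hM (WeakDual.toStrongDual z) hz⟩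

section L1Ball

/-- The closed unit ball of `ℓ¹`, as a subset of `ℕ → ℝ` with the product topology. -/
def l1Ball : Set (ℕ → ℝ) := {l | ∀ F : Finset ℕ, ∑ n ∈ F, |l n| ≤ 1}

variable {l p q : ℕ → ℝ}

theorem isCompact_l1Ball : IsCompact l1Ball := by
  have hclosed : IsClosed l1Ball := by
    simp only [l1Ball, Set.ofPred_forall]
    exact isClosed_iInter fun F =>
      isClosed_le (continuous_finsetSum F fun n _ => (continuous_apply n).abs) continuous_const
  refine (isCompact_univ_pi fun _ : ℕ => isCompact_Icc (a := (-1 : ℝ)) (b := 1)).of_isClosed_subset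
    hclosed fun l hl => Set.mem_univ_pi.2 fun n => abs_le.1 ?_
  simpa using hl {n}

theorem summable_abs_of_mem_l1Ball (hl : l ∈ l1Ball) : Summable fun n => |l n| :=
  summable_of_sum_range_le (fun _ => abs_nonneg _) fun n => hl (Finset.range n)

theorem tsum_abs_le_one_of_mem_l1Ball (hl : l ∈ l1Ball) : ∑' n, |l n| ≤ 1 :=
  (summable_abs_of_mem_l1Ball hl).tsum_le_of_sum_le hl

theorem smul_add_smul_mem_l1Ball (hp : p ∈ l1Ball) (hq : q ∈ l1Ball) {s t : ℝ}
    (hst : |s| + |t| ≤ 1) : s • p + t • q ∈ l1Ball := fun F =>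
  calc ∑ n ∈ F, |s * p n + t * q n|
      ≤ ∑ n ∈ F, (|s| * |p n| + |t| * |q n|) :=
        Finset.sum_le_sum fun n _ => (abs_add_le _ _).trans_eq (by rw [abs_mul, abs_mul])
    _ = |s| * ∑ n ∈ F, |p n| + |t| * ∑ n ∈ F, |q n| := by
        rw [Finset.sum_add_distrib, Finset.mul_sum, Finset.mul_sum]
    _ ≤ |s| * 1 + |t| * 1 := by gcongr; exacts [hp F, hq F]
    _ ≤ 1 := by linarith

theorem single_mem_l1Ball (n : ℕ) : Pi.single n (1 : ℝ) ∈ l1Ball := fun F => by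
  simp only [Pi.single_apply, apply_ite abs, abs_one, abs_zero, Finset.sum_ite_eq']
  split_ifs <;> norm_num

theorem comp_add_right_mem_l1Ball (hl : l ∈ l1Ball) (N : ℕ) : (fun n => l (n + N)) ∈ l1Ball :=
  fun F => by simpa using hl (F.map (addRightEmbedding N))

variable {E : Type*} [NormedAddCommGroup E] [NormedSpace ℝ E] {e : ℕ → E} {C : ℝ}

theorem summable_smul_of_mem_l1Ball [CompleteSpace E] (hl : l ∈ l1Ball) (he : ∀ n, ‖e n‖ ≤ C) :
    Summable fun n => l n • e n :=
  ((summable_abs_of_mem_l1Ball hl).mul_right C).of_norm_bounded fun n => by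
    rw [norm_smul, Real.norm_eq_abs]
    exact mul_le_mul_of_nonneg_left (he n) (abs_nonneg _)

theorem norm_tsum_smul_le_of_mem_l1Ball (hl : l ∈ l1Ball) (he : ∀ n, ‖e n‖ ≤ C) :
    ‖∑' n, l n • e n‖ ≤ C := by
  have hC : 0 ≤ C := (norm_nonneg _).trans (he 0)
  calc ‖∑' n, l n • e n‖ ≤ ∑' n, |l n| * C :=
        tsum_of_norm_bounded ((summable_abs_of_mem_l1Ball hl).mul_right C).hasSum fun n => by
          rw [norm_smul, Real.norm_eq_abs]
          exact mul_le_mul_of_nonneg_left (he n) (abs_nonneg _)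
    _ = (∑' n, |l n|) * C := tsum_mul_right
    _ ≤ 1 * C := by gcongr; exact tsum_abs_le_one_of_mem_l1Ball hl
    _ = C := one_mul C

theorem tendstoUniformlyOn_l1Ball_sum_range_mul {a : ℕ → ℝ} (ha : Tendsto a atTop (𝓝 0)) :
    TendstoUniformlyOn (fun N l => ∑ n ∈ Finset.range N, l n * a n)
      (fun l => ∑' n, l n * a n) atTop l1Ball := by
  rw [Metric.tendstoUniformlyOn_iff]
  intro ε hε
  obtain ⟨N₀, hN₀⟩ := Metric.tendsto_atTop.1 ha (ε / 2) (half_pos hε)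
  filter_upwards [eventually_ge_atTop N₀] with N hN l hl
  have htail : ∀ n, ‖a (n + N)‖ ≤ ε / 2 := fun n => by
    simpa using (hN₀ (n + N) (by omega)).le
  have hsum : Summable fun n => l n * a n :=
    (summable_nat_add_iff N).1 (summable_smul_of_mem_l1Ball (comp_add_right_mem_l1Ball hl N) htail)
  rw [dist_eq_norm, ← hsum.sum_add_tsum_nat_add N, add_sub_cancel_left]
  exact (norm_tsum_smul_le_of_mem_l1Ball (comp_add_right_mem_l1Ball hl N) htail).trans_lt
    (half_lt_self hε)

theorem continuousOn_l1Ball_tsum_mul {a : ℕ → ℝ} (ha : Tendsto a atTop (𝓝 0)) :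
    ContinuousOn (fun l => ∑' n, l n * a n) l1Ball :=
  (tendstoUniformlyOn_l1Ball_sum_range_mul ha).continuousOn <| Frequently.of_forall fun _ =>
    (continuous_finsetSum _ fun n _ => (continuous_apply n).mul continuous_const).continuousOn

end L1Ball

section WeakDualSeries

variable {X : Type*} [NormedAddCommGroup X] [NormedSpace ℝ X] {e : ℕ → WeakDual ℝ X} {C : ℝ}
  {l p q : ℕ → ℝ}

/-- `∑ lₙ eₙ`, summed in the norm of `X*` (junk value `0` when the series is not summable). -/
noncomputable def weakDualSeries (e : ℕ → WeakDual ℝ X) (l : ℕ → ℝ) : WeakDual ℝ X :=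
  StrongDual.toWeakDual (∑' n, l n • WeakDual.toStrongDual (e n))

theorem weakDualSeries_apply (hl : l ∈ l1Ball) (he : ∀ n, ‖WeakDual.toStrongDual (e n)‖ ≤ C)
    (x : X) : weakDualSeries e l x = ∑' n, l n * e n x :=
  (ContinuousLinearMap.apply ℝ ℝ x).map_tsum (summable_smul_of_mem_l1Ball hl he)

theorem weakDualSeries_single (n : ℕ) : weakDualSeries e (Pi.single n 1) = e n := by
  simp [weakDualSeries, Pi.single_apply, ite_smul]

theorem weakDualSeries_smul_add_smul (hp : p ∈ l1Ball) (hq : q ∈ l1Ball)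
    (he : ∀ n, ‖WeakDual.toStrongDual (e n)‖ ≤ C) (s t : ℝ) :
    weakDualSeries e (s • p + t • q) = s • weakDualSeries e p + t • weakDualSeries e q := by
  have hp' := summable_smul_of_mem_l1Ball hp he
  have hq' := summable_smul_of_mem_l1Ball hq he
  simp only [weakDualSeries, Pi.add_apply, Pi.smul_apply, smul_eq_mul, add_smul, mul_smul]
  rw [(hp'.const_smul s).tsum_add (hq'.const_smul t), tsum_const_smul'', tsum_const_smul'']
  rfl

theorem continuousOn_weakDualSeries (he : ∀ n, ‖WeakDual.toStrongDual (e n)‖ ≤ C)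
    (he₀ : Tendsto e atTop (𝓝 0)) : ContinuousOn (weakDualSeries e) l1Ball := by
  rw [continuousOn_iff_continuous_domRestrict]
  refine WeakDual.continuous_of_continuous_eval fun x => ?_
  have hx : Tendsto (fun n => e n x) atTop (𝓝 0) :=
    ((WeakDual.eval_continuous x).tendsto' 0 0 rfl).comp he₀
  have := continuousOn_l1Ball_tsum_mul hx
  rw [continuousOn_iff_continuous_domRestrict] at this
  exact this.congr fun l => (weakDualSeries_apply l.2 he x).symm

theorem weakDualSeries_mem {Y : Submodule ℝ (WeakDual ℝ X)} (hY : NormClosed X Y)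
    (heY : ∀ n, e n ∈ Y) (hl : l ∈ l1Ball) (he : ∀ n, ‖WeakDual.toStrongDual (e n)‖ ≤ C) :
    weakDualSeries e l ∈ Y := by
  obtain ⟨z, hzY, hz⟩ := hY.mem_of_tendsto
    (summable_smul_of_mem_l1Ball hl he).hasSum.tendsto_sum_nat
    (Eventually.of_forall fun N => ⟨∑ n ∈ Finset.range N, l n • e n,
      Y.sum_mem fun n _ => Y.smul_mem _ (heY n), by simp⟩)
  rwa [weakDualSeries, ← hz]

theorem exists_absConvex_isCompact_of_tendsto_zero [CompleteSpace X]
    {Y : Submodule ℝ (WeakDual ℝ X)} (hY : NormClosed X Y) (heY : ∀ n, e n ∈ Y)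
    (he₀ : Tendsto e atTop (𝓝 0)) :
    ∃ K ⊆ (Y : Set (WeakDual ℝ X)), Convex ℝ K ∧ Balanced ℝ K ∧ IsCompact K ∧ ∀ n, e n ∈ K := by
  obtain ⟨C, hC⟩ := WeakDual.exists_norm_le_of_isCompact he₀.isCompact_insert_range
  have he : ∀ n, ‖WeakDual.toStrongDual (e n)‖ ≤ C :=
    fun n => hC _ (Set.mem_insert_of_mem _ ⟨n, rfl⟩)
  refine ⟨weakDualSeries e '' l1Ball, ?_, ?_, ?_,
    isCompact_l1Ball.image_of_continuousOn (continuousOn_weakDualSeries he he₀),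
    fun n => ⟨_, single_mem_l1Ball n, weakDualSeries_single n⟩⟩
  · rintro _ ⟨l, hl, rfl⟩
    exact weakDualSeries_mem hY heY hl he
  · rintro _ ⟨p, hp, rfl⟩ _ ⟨q, hq, rfl⟩ s t hs ht hst
    refine ⟨s • p + t • q, smul_add_smul_mem_l1Ball hp hq ?_,
      weakDualSeries_smul_add_smul hp hq he s t⟩
    rw [abs_of_nonneg hs, abs_of_nonneg ht, hst]
  · rintro c hc _ ⟨_, ⟨p, hp, rfl⟩, rfl⟩
    refine ⟨c • p + 0 • p, smul_add_smul_mem_l1Ball hp hp (by simpa using hc), ?_⟩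
    simpa using weakDualSeries_smul_add_smul hp hp he c 0

end WeakDualSeries

section Mazur

variable {X : Type*} [NormedAddCommGroup X] [NormedSpace ℝ X]

def PropertyE' (X : Type*) [NormedAddCommGroup X] [NormedSpace ℝ X] : Prop :=
  ∀ C : Set (WeakDual ℝ X), Convex ℝ C → (∃ M : ℝ, ∀ y ∈ C, dnorm X y ≤ M) →
    (∀ (u : ℕ → WeakDual ℝ X) (z : WeakDual ℝ X),
      (∀ n, u n ∈ C) → Tendsto u atTop (𝓝 z) → z ∈ C) →
    IsClosed C

theorem WStarSeqCont.neg {Y : Submodule ℝ (WeakDual ℝ X)} {f : Y →ₗ[ℝ] ℝ}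
    (hf : WStarSeqCont X f) : WStarSeqCont X (-f) :=
  fun u y hu => (hf u y hu).neg

variable [CompleteSpace X] {Y : Submodule ℝ (WeakDual ℝ X)} {K : Set (WeakDual ℝ X)}

theorem isClosed_sublevel_of_wStarSeqCont (hE : PropertyE' X) {f : Y →ₗ[ℝ] ℝ}
    (hf : WStarSeqCont X f) (hKY : K ⊆ Y) (hK : Convex ℝ K) (hKc : IsCompact K) (a : ℝ) :
    IsClosed {z : WeakDual ℝ X | ∃ hz : z ∈ Y, z ∈ K ∧ f ⟨z, hz⟩ ≤ a} := by
  refine hE _ ?_ ?_ ?_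
  · rintro z₁ ⟨hz₁, hK₁, hf₁⟩ z₂ ⟨hz₂, hK₂, hf₂⟩ s t hs ht hst
    refine ⟨Y.add_mem (Y.smul_mem s hz₁) (Y.smul_mem t hz₂), hK hK₁ hK₂ hs ht hst, ?_⟩
    calc f (s • ⟨z₁, hz₁⟩ + t • ⟨z₂, hz₂⟩) = s * f ⟨z₁, hz₁⟩ + t * f ⟨z₂, hz₂⟩ := by
          rw [← smul_eq_mul, ← smul_eq_mul, ← map_smul, ← map_smul, ← map_add]
      _ ≤ s * a + t * a := by gcongr
      _ = a := by rw [← add_mul, hst, one_mul]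
  · obtain ⟨M, hM⟩ := WeakDual.exists_norm_le_of_isCompact hKc
    exact ⟨M, fun z hz => hM z hz.2.1⟩
  · rintro u z hu hlim
    have hzK : z ∈ K := hKc.isClosed.mem_of_tendsto hlim (Eventually.of_forall fun n => (hu n).2.1)
    exact ⟨hKY hzK, hzK, le_of_tendsto (hf (fun n => ⟨u n, (hu n).1⟩) ⟨z, hKY hzK⟩ hlim)
      (Eventually.of_forall fun n => (hu n).2.2)⟩

theorem continuousOn_of_wStarSeqCont (hE : PropertyE' X) {f : Y →ₗ[ℝ] ℝ}
    (hf : WStarSeqCont X f) (hKY : K ⊆ Y) (hK : Convex ℝ K) (hKc : IsCompact K) :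
    ContinuousOn (fun y : Y => f y) (Subtype.val ⁻¹' K) := by
  have hsub : ∀ g : Y →ₗ[ℝ] ℝ, WStarSeqCont X g → ∀ a : ℝ,
      IsClosed ((Subtype.val ⁻¹' K).domRestrict (fun y : Y => g y) ⁻¹' Set.Iic a) := by
    intro g hg a
    convert (isClosed_sublevel_of_wStarSeqCont hE hg hKY hK hKc a).preimage
      (continuous_subtype_val.comp continuous_subtype_val) using 1
    ext p
    exact ⟨fun h => ⟨p.1.2, p.2, h⟩, fun ⟨_, _, h⟩ => h⟩
  rw [continuousOn_iff_continuous_domRestrict, continuous_iff_lower_upperSemicontinuous,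
    lowerSemicontinuous_iff_isClosed_preimage, upperSemicontinuous_iff_isClosed_preimage]
  refine ⟨hsub f hf, fun a => ?_⟩
  convert hsub (-f) hf.neg (-a) using 1
  ext p
  simp only [Set.mem_preimage, Set.mem_Ici, Set.mem_Iic, Set.domRestrict_apply,
    LinearMap.neg_apply, neg_le_neg_iff]

theorem grothendieckCond_of_wStarSeqCont (hE : PropertyE' X) {f : Y →ₗ[ℝ] ℝ}
    (hf : WStarSeqCont X f) : GrothendieckCond X f :=
  fun _ hKY hK _ hKc => continuousOn_of_wStarSeqCont hE hf hKY hK hKc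

theorem wStarSeqCont_of_grothendieckCond (hY : NormClosed X Y) {f : Y →ₗ[ℝ] ℝ}
    (hf : GrothendieckCond X f) : WStarSeqCont X f := by
  intro u y hu
  have hd : Tendsto (fun n => ((u n - y : Y) : WeakDual ℝ X)) atTop (𝓝 0) := by
    simpa using hu.sub_const (y : WeakDual ℝ X)
  obtain ⟨K, hKY, hK, hKb, hKc, hdK⟩ :=
    exists_absConvex_isCompact_of_tendsto_zero hY (fun n => (u n - y).2) hd
  have h0 : (0 : Y) ∈ Subtype.val ⁻¹' K := hKb.zero_mem ⟨_, hdK 0⟩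
  have hlim : Tendsto (fun n => f (u n - y)) atTop (𝓝 (f 0)) :=
    (hf K hKY hK hKb hKc 0 h0).tendsto.comp <| tendsto_nhdsWithin_iff.2
      ⟨Topology.IsInducing.subtypeVal.tendsto_nhds_iff.2 hd, Eventually.of_forall hdK⟩
  simpa using hlim.const_add (f y)

end Mazur

/-- If `X` has property (E′) — every convex norm-bounded weak-star
sequentially closed subset of `X*` is weak-star closed — then `X` is fully Mackey complete
iff `X` is fully Mazur. -/
theorem statement19 (X : Type*) [NormedAddCommGroup X] [NormedSpace ℝ X] [CompleteSpace X]
    (hE' : ∀ C : Set (WeakDual ℝ X), Convex ℝ C → (∃ M : ℝ, ∀ y ∈ C, dnorm X y ≤ M) →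
      (∀ (u : ℕ → WeakDual ℝ X) (z : WeakDual ℝ X),
        (∀ n, u n ∈ C) → Tendsto u atTop (𝓝 z) → z ∈ C) →
      IsClosed C) :
    FullyMackeyComplete X ↔ FullyMazur X :=
  ⟨fun h Y hYn hYc f hf => h Y hYn hYc f (grothendieckCond_of_wStarSeqCont hE' hf),
    fun h Y hYn hYc f hf => h Y hYn hYc f (wStarSeqCont_of_grothendieckCond hYc hf)⟩
end
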